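/- The worst-case number of cut-and-paste moves needed to sort a permutation of [n] is at least ⌊n/2⌋. -/
import Mathlib


/-- A cut-and-paste move: cut out a contiguous substring `M`, optionally
reverse it, and paste it back at any position of the remaining string. -/
def IsMove (l l' : List ℕ) : Prop :=
  ∃ P M S X Y : List ℕ, l = P ++ M ++ S ∧ X ++ Y = P ++ S ∧
    (l' = X ++ M ++ Y ∨ l' = X ++ M.reverse ++ Y)

/-- `MoveSeq k l l'` : `l` can be transformed into `l'` by exactly `k`
cut-and-paste moves. -/
inductive MoveSeq : ℕ → List ℕ → List ℕ → Prop
  | refl (l : List ℕ) : MoveSeq 0 l l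
  | step {k : ℕ} {l l' l'' : List ℕ} :
      IsMove l l' → MoveSeq k l' l'' → MoveSeq (k + 1) l l''

/-- Number of parity adjacencies: consecutive pairs of opposite parity. -/
def parityAdj (l : List ℕ) : ℕ :=
  (l.zip l.tail).countP (fun p => p.1 % 2 != p.2 % 2)

/-- Number of adjacencies: consecutive pairs whose values differ by 1. -/
def adjCount (l : List ℕ) : ℕ :=
  (l.zip l.tail).countP (fun p => (p.1 + 1 == p.2) || (p.2 + 1 == p.1))

/-- Parity mismatch of a single junction. -/
def J (a b : ℕ) : ℕ := (a % 2 + b % 2) % 2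

lemma J_le (a b : ℕ) : J a b ≤ 1 := by unfold J; omega

lemma pa_single (a : ℕ) : parityAdj [a] = 0 := rfl

lemma pa_cons (a b : ℕ) (l : List ℕ) :
    parityAdj (a :: b :: l) = J a b + parityAdj (b :: l) := by
  have h1 : parityAdj (a :: b :: l)
      = (if (a % 2 != b % 2) then 1 else 0) + parityAdj (b :: l) := by
    simp [parityAdj, List.countP_cons, Nat.add_comm]
  rw [h1]
  by_cases h : a % 2 = b % 2 <;> simp [J, h] <;> omega

lemma pa_append (A : List ℕ) (p q : ℕ) (B : List ℕ) :
    parityAdj (A ++ p :: q :: B) = parityAdj (A ++ [p]) + J p q + parityAdj (q :: B) := by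
  induction A with
  | nil => simp [pa_cons, pa_single, Nat.add_comm]
  | cons a A ih =>
    cases A with
    | nil => simp [List.cons_append, pa_cons, pa_single]; ring
    | cons c A' =>
      have l1 : (a :: c :: A') ++ p :: q :: B = a :: c :: (A' ++ p :: q :: B) := rfl
      have l2 : (a :: c :: A') ++ [p] = a :: c :: (A' ++ [p]) := rfl
      rw [l1, l2, pa_cons, pa_cons,
          show c :: (A' ++ p :: q :: B) = (c :: A') ++ p :: q :: B from rfl,
          show c :: (A' ++ [p]) = (c :: A') ++ [p] from rfl, ih]
      ring

lemma pa_rev_aux : ∀ (l : List ℕ) (a : ℕ), parityAdj (l.reverse ++ [a]) = parityAdj (a :: l)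
  | [], a => rfl
  | b :: l, a => by
    have e : (b :: l).reverse ++ [a] = l.reverse ++ b :: a :: [] := by simp
    rw [e, pa_append, pa_rev_aux l b, pa_single, pa_cons]
    have : J b a = J a b := by unfold J; omega
    omega

lemma exists_concat {l : List ℕ} (h : l ≠ []) : ∃ L b, l = L ++ [b] := by
  rcases List.eq_nil_or_concat l with h' | ⟨L, b, h'⟩
  · exact absurd h' h
  · exact ⟨L, b, by simpa [List.concat_eq_append] using h'⟩

lemma exists_cons {l : List ℕ} (h : l ≠ []) : ∃ b L, l = b :: L := by
  cases l with
  | nil => exact absurd rfl h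
  | cons b L => exact ⟨b, L, rfl⟩

lemma pa_const (r : ℕ) : ∀ (l : List ℕ), (∀ x ∈ l, x % 2 = r) → parityAdj l = 0
  | [], _ => rfl
  | [a], _ => pa_single a
  | a :: b :: l, h => by
    rw [pa_cons]
    have ha := h a (by simp)
    have hb := h b (by simp)
    have hJ : J a b = 0 := by unfold J; omega
    rw [hJ, pa_const r (b :: l) (fun x hx => h x (List.mem_cons_of_mem a hx))]

lemma pa_append_le (A B : List ℕ) (hA : A ≠ []) (hB : B ≠ []) :
    parityAdj (A ++ B) ≤ parityAdj A + 1 + parityAdj B := by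
  obtain ⟨Ai, al, hA'⟩ := exists_concat hA
  obtain ⟨bh, Bi, hB'⟩ := exists_cons hB
  rw [hA', hB', show (Ai ++ [al]) ++ bh :: Bi = Ai ++ al :: bh :: Bi by simp, pa_append]
  have := J_le al bh
  omega

lemma pa_range' : ∀ (n a : ℕ), parityAdj (List.range' a (n + 1)) = n
  | 0, a => by simpa using pa_single a
  | n + 1, a => by
    rw [List.range'_succ, List.range'_succ, pa_cons, ← List.range'_succ,
      pa_range' n (a + 1)]
    have : J a (a + 1) = 1 := by unfold J; omega
    omega

lemma pa_identity (n : ℕ) :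
    parityAdj (0 :: List.range' 1 n ++ [n + 1]) = n + 1 := by
  have e : 0 :: List.range' 1 n ++ [n + 1] = List.range' 0 (n + 2) := by
    rw [show n + 2 = (n + 1) + 1 from rfl, List.range'_concat, List.range'_succ]
    simp
  rw [e, pa_range']

/-- Each cut-and-paste move increases the sentinel-extended parity-adjacency
count by at most 2. -/
lemma move_step (a z : ℕ) {l l' : List ℕ} (h : IsMove l l') :
    parityAdj (a :: l' ++ [z]) ≤ parityAdj (a :: l ++ [z]) + 2 := by
  obtain ⟨P, M, S, X, Y, hl, hXY, hl'⟩ := h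
  cases M with
  | nil =>
    have hll : l' = l := by
      rcases hl' with h | h <;> simp only [List.reverse_nil, List.append_nil,
        List.nil_append] at h hl <;> rw [h, hXY, hl]
    rw [hll]; omega
  | cons mh M₀ =>
    obtain ⟨Mi, mt, hM⟩ := exists_concat (l := mh :: M₀) (by simp)
    obtain ⟨Pi, pl, hP⟩ := exists_concat (l := a :: P) (by simp)
    obtain ⟨Xi, x, hX⟩ := exists_concat (l := a :: X) (by simp)
    obtain ⟨s, Si, hS⟩ := exists_cons (l := S ++ [z]) (by simp)
    obtain ⟨y, Yi, hY⟩ := exists_cons (l := Y ++ [z]) (by simp)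
    have hlist1 : a :: l ++ [z] = Pi ++ pl :: mh :: (M₀ ++ s :: Si) := by
      rw [hl]
      have h1 : a :: (P ++ (mh :: M₀) ++ S) ++ [z]
          = (a :: P) ++ mh :: (M₀ ++ (S ++ [z])) := by simp
      rw [h1, hP, hS]; simp
    have hlist2 : mh :: (M₀ ++ s :: Si) = Mi ++ mt :: s :: Si := by
      rw [show mh :: (M₀ ++ s :: Si) = (mh :: M₀) ++ s :: Si from rfl, hM]; simp
    have hMi : parityAdj (Mi ++ [mt]) = parityAdj (mh :: M₀) := by rw [← hM]
    have EL : parityAdj (a :: l ++ [z]) = parityAdj (Pi ++ [pl]) + J pl mh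
        + (parityAdj (mh :: M₀) + J mt s + parityAdj (s :: Si)) := by
      rw [hlist1, pa_append, hlist2, pa_append, hMi]
    have hcross : parityAdj (Xi ++ [x]) + J x y + parityAdj (y :: Yi)
        = parityAdj (Pi ++ [pl]) + J pl s + parityAdj (s :: Si) := by
      have e : Xi ++ x :: y :: Yi = Pi ++ pl :: s :: Si := by
        have e1 : Xi ++ x :: y :: Yi = (a :: X) ++ (Y ++ [z]) := by rw [hX, hY]; simp
        have e2 : Pi ++ pl :: s :: Si = (a :: P) ++ (S ++ [z]) := by rw [hP, hS]; simp
        rw [e1, e2, show (a :: X) ++ (Y ++ [z]) = a :: (X ++ Y) ++ [z] by simp,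
          show (a :: P) ++ (S ++ [z]) = a :: (P ++ S) ++ [z] by simp, hXY]
      rw [← pa_append, ← pa_append, e]
    have key1 : J x mh + J mt y + J pl s ≤ J pl mh + J mt s + J x y + 2 := by
      unfold J; omega
    have key2 : J x mt + J mh y + J pl s ≤ J pl mh + J mt s + J x y + 2 := by
      unfold J; omega
    rcases hl' with h | h
    · have hlist3 : a :: l' ++ [z] = Xi ++ x :: mh :: (M₀ ++ y :: Yi) := by
        rw [h]
        have h1 : a :: (X ++ (mh :: M₀) ++ Y) ++ [z]
            = (a :: X) ++ mh :: (M₀ ++ (Y ++ [z])) := by simp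
        rw [h1, hX, hY]; simp
      have hlist4 : mh :: (M₀ ++ y :: Yi) = Mi ++ mt :: y :: Yi := by
        rw [show mh :: (M₀ ++ y :: Yi) = (mh :: M₀) ++ y :: Yi from rfl, hM]; simp
      have ER : parityAdj (a :: l' ++ [z]) = parityAdj (Xi ++ [x]) + J x mh
          + (parityAdj (mh :: M₀) + J mt y + parityAdj (y :: Yi)) := by
        rw [hlist3, pa_append, hlist4, pa_append, hMi]
      omega
    · have hrev1 : (mh :: M₀).reverse = mt :: Mi.reverse := by rw [hM]; simp
      have hrev2 : (mh :: M₀).reverse = M₀.reverse ++ [mh] := by simp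
      have hlist3 : a :: l' ++ [z] = Xi ++ x :: mt :: (Mi.reverse ++ y :: Yi) := by
        rw [h]
        have h1 : a :: (X ++ (mh :: M₀).reverse ++ Y) ++ [z]
            = (a :: X) ++ ((mh :: M₀).reverse ++ (Y ++ [z])) := by simp
        rw [h1, hrev1, hX, hY]; simp
      have hlist4 : mt :: (Mi.reverse ++ y :: Yi) = M₀.reverse ++ mh :: y :: Yi := by
        rw [show mt :: (Mi.reverse ++ y :: Yi) = (mt :: Mi.reverse) ++ y :: Yi from rfl,
          ← hrev1, hrev2]; simp
      have hrevpa : parityAdj (M₀.reverse ++ [mh]) = parityAdj (mh :: M₀) := pa_rev_aux M₀ mh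
      have ER : parityAdj (a :: l' ++ [z]) = parityAdj (Xi ++ [x]) + J x mt
          + (parityAdj (mh :: M₀) + J mh y + parityAdj (y :: Yi)) := by
        rw [hlist3, pa_append, hlist4, pa_append, hrevpa]
      omega

lemma moveseq_bound (z : ℕ) : ∀ {k : ℕ} {l l'' : List ℕ}, MoveSeq k l l'' →
    parityAdj (0 :: l'' ++ [z]) ≤ parityAdj (0 :: l ++ [z]) + 2 * k := by
  intro k l l'' h
  induction h with
  | refl l => omega
  | step hm _ ih =>
    have := move_step 0 z hm
    omega

/-- The worst-case number of cut-and-paste moves needed to sort a permutation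
of `[n]` is at least `⌊n/2⌋`. -/
theorem lower_bound_half (n : ℕ) (hn : 0 < n) :
    ∃ l : List ℕ, l.Perm (List.range' 1 n) ∧
      ∀ k : ℕ, MoveSeq k l (List.range' 1 n) → n / 2 ≤ k := by
  refine ⟨(List.range' 1 n).filter (fun x => x % 2 == 0)
      ++ (List.range' 1 n).filter (fun x => !(x % 2 == 0)),
    List.filter_append_perm _ _, ?_⟩
  intro k hk
  set ev := (List.range' 1 n).filter (fun x => x % 2 == 0) with hevdef
  set od := (List.range' 1 n).filter (fun x => !(x % 2 == 0)) with hoddef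
  have hev : ∀ x ∈ ev, x % 2 = 0 := by
    intro x hx
    have := (List.mem_filter.mp hx).2
    simpa using this
  have hod : ∀ x ∈ od, x % 2 = 1 := by
    intro x hx
    have := (List.mem_filter.mp hx).2
    simp at this
    omega
  have hA : parityAdj (0 :: ev) = 0 := by
    apply pa_const 0
    intro x hx
    rcases List.mem_cons.mp hx with h | h
    · simp [h]
    · exact hev x h
  have hB : parityAdj (od ++ [n + 1]) ≤ n % 2 := by
    rcases Nat.mod_two_eq_zero_or_one n with h2 | h2
    · have : parityAdj (od ++ [n + 1]) = 0 := by
        apply pa_const 1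
        intro x hx
        rcases List.mem_append.mp hx with h | h
        · exact hod x h
        · simp at h; omega
      omega
    · have h1 : (1 : ℕ) ∈ od := by
        rw [hoddef]
        refine List.mem_filter.mpr ⟨?_, by simp⟩
        exact List.mem_range'_1.mpr ⟨le_refl 1, by omega⟩
      have hne : od ≠ [] := by intro h; rw [h] at h1; simp at h1
      have hle := pa_append_le od [n + 1] hne (by simp)
      have hodpa : parityAdj od = 0 := pa_const 1 od hod
      have := pa_single (n + 1)
      omega
  have hΦ0 : parityAdj (0 :: (ev ++ od) ++ [n + 1]) ≤ 1 + n % 2 := by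
    have e : 0 :: (ev ++ od) ++ [n + 1] = (0 :: ev) ++ (od ++ [n + 1]) := by simp
    rw [e]
    have := pa_append_le (0 :: ev) (od ++ [n + 1]) (by simp) (by simp)
    omega
  have hfin := moveseq_bound (n + 1) hk
  rw [pa_identity] at hfin
  have hc : n + 1 ≤ (1 + n % 2) + 2 * k :=
    le_trans hfin (Nat.add_le_add_right hΦ0 (2 * k))
  omega
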